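/- Let n ≥ 1 and let d ∈ P^ms_C(2n) = P_{1,1}(2n). Then f_CD(d) := d_D, the D-collapse of d, belongs to P^sp_D(2n) = P_{0,0}(2n). -/

import Mathlib

/-- A partition of `N`: a non-increasing list of positive naturals summing to `N`. -/
def IsPartition (N : ℕ) (l : List ℕ) : Prop :=
  l.Pairwise (· ≥ ·) ∧ (∀ p ∈ l, 0 < p) ∧ l.sum = N

/-- Dominance order on partitions: `Dom p q` means `p ⪯ q`,
i.e. every initial partial sum of `p` is at most that of `q`. -/
def Dom (p q : List ℕ) : Prop :=
  ∀ j : ℕ, (p.take j).sum ≤ (q.take j).sum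

/-- The height `h_d(s) = #{j : d_j ≥ s}`. -/
def height (l : List ℕ) (s : ℕ) : ℕ :=
  (l.filter (fun p => decide (s ≤ p))).length

/-- Membership in `P_ε(N)`: every part congruent to `ε` mod 2 occurs with even multiplicity. -/
def PEps (e : ℕ) (l : List ℕ) : Prop :=
  ∀ s ∈ l, s % 2 = e % 2 → Even (l.count s)

/-- Membership in `P_{ε,ε'}(N)`: lies in `P_ε` and `h_d(s) ≡ ε'  (mod 2)` for every integer
`s ≥ 0` with `s ≡ ε (mod 2)` which is either `0` or a part of `d`. -/
def PEpsEps (e e' : ℕ) (l : List ℕ) : Prop :=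
  PEps e l ∧
    ∀ s : ℕ, s % 2 = e % 2 → (s = 0 ∨ s ∈ l) → height l s % 2 = e' % 2

/-- `d⁺ = [d₁ + 1, d₂, …, d_k]`. -/
def dplus : List ℕ → List ℕ
  | [] => []
  | a :: rest => (a + 1) :: rest

/-- `d⁻ = [d₁, …, d_{k−1}, d_k − 1]`, the last entry removed if `d_k = 1`. -/
def dminus (l : List ℕ) : List ℕ :=
  (l.dropLast ++ [l.getLastD 0 - 1]).filter (fun p => decide (0 < p))

/-- `IsCollapse e N l c` says that `c` is the collapse of `l` into `P_e`: the greatest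
element, in the dominance order, of the set of partitions of `N` lying in `P_e` and
dominated by `l`. -/
def IsCollapse (e N : ℕ) (l c : List ℕ) : Prop :=
  IsPartition N c ∧ PEps e c ∧ Dom c l ∧
    ∀ m : List ℕ, IsPartition N m → PEps e m → Dom m l → Dom m c

/-!
The height of `e = d_D` at `0` is its length, which is even because the even parts of `e` come in
pairs and `e` sums to `2n`. Let `s` be an even part of `e`, occurring `m` times (`m` even), and
suppose `h_e(s) = a + m` is odd, `a` being the number of parts larger than `s`. As their even
values come in pairs, these `a` parts have an odd sum, so every partial sum `e₁ + ⋯ + e_j` with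
`a < j < a + m` is odd. It cannot equal the
corresponding partial sum of `d`: equality would force `d_j = s`, and then `d₁ + ⋯ + d_j` is even,
because the odd parts of `d` come in pairs and none of them is split by the cut after `d_j`. So `d`
strictly dominates `e` on that range, and replacing the first `s` by `s + 1` and the last by
`s - 1` yields a partition in `P_0` which is still dominated by `d` but not by `e`, contradicting
the maximality of `e`.
-/

namespace List

theorem even_length_of_forall_even_count {α : Type*} [DecidableEq α] {l : List α}
    (h : ∀ a, Even (l.count a)) : Even l.length := by
  rw [← Multiset.coe_card, ← Multiset.toFinset_sum_count_eq]
  exact Finset.even_sum _ fun a _ => Multiset.coe_count a l ▸ h a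

theorem even_countP_of_forall_even_count {α : Type*} [DecidableEq α] {l : List α}
    (p : α → Bool) (h : ∀ a, p a → Even (l.count a)) : Even (l.countP p) := by
  rw [countP_eq_length_filter]
  refine even_length_of_forall_even_count fun a => ?_
  by_cases ha : p a
  · rw [count_filter ha]
    exact h a ha
  · rw [count_eq_zero.2 fun hmem => ha (of_mem_filter hmem)]
    exact Even.zero

theorem even_sum_iff_even_countP_odd (l : List ℕ) :
    Even l.sum ↔ Even (l.countP (· % 2 = 1)) := by
  induction l with
  | nil => simp
  | cons x l ih =>
    rw [sum_cons, countP_cons, Nat.even_add, ih, Nat.even_add]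
    rcases Nat.mod_two_eq_zero_or_one x with hx | hx <;> simp [hx, Nat.even_iff]

theorem sum_take_succ_getD (l : List ℕ) (i : ℕ) :
    (l.take (i + 1)).sum = (l.take i).sum + l.getD i 0 := by
  rw [take_add_one, sum_append, getD_eq_getElem?_getD]
  cases l[i]? <;> simp

theorem getD_le_getD_of_pairwise_ge {l : List ℕ} (hl : l.Pairwise (· ≥ ·)) {i j : ℕ}
    (hij : i ≤ j) : l.getD j 0 ≤ l.getD i 0 := by
  rcases lt_or_ge j l.length with hj | hj
  · rw [getD_eq_getElem _ _ hj, getD_eq_getElem _ _ (by omega)]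
    rcases hij.lt_or_eq with hij | rfl
    · exact pairwise_iff_getElem.1 hl i j _ _ hij
    · rfl
  · rw [getD_eq_default _ _ hj]
    exact Nat.zero_le _

theorem getD_le_of_mem_take {l : List ℕ} (hl : l.Pairwise (· ≥ ·)) {t x : ℕ}
    (hx : x ∈ l.take (t + 1)) : l.getD t 0 ≤ x := by
  obtain ⟨i, hi, rfl⟩ := mem_iff_getElem.1 hx
  rw [getElem_take, ← getD_eq_getElem _ 0]
  exact getD_le_getD_of_pairwise_ge hl (by simp at hi; omega)

theorem le_getD_of_mem_drop {l : List ℕ} (hl : l.Pairwise (· ≥ ·)) {t x : ℕ}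
    (hx : x ∈ l.drop t) : x ≤ l.getD t 0 := by
  obtain ⟨i, hi, rfl⟩ := mem_iff_getElem.1 hx
  rw [getElem_drop, ← getD_eq_getElem _ 0]
  exact getD_le_getD_of_pairwise_ge hl (Nat.le_add_right t i)

theorem eq_filter_append_replicate_append_filter {l : List ℕ} (hl : l.Pairwise (· ≥ ·))
    (s : ℕ) : l = l.filter (s < ·) ++ replicate (l.count s) s ++ l.filter (· < s) := by
  induction l with
  | nil => simp
  | cons x l ih =>
    obtain ⟨hx, hl'⟩ := pairwise_cons.1 hl
    rcases lt_trichotomy s x with hsx | rfl | hxs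
    · simpa [hsx, hsx.ne', not_lt.2 hsx.le] using ih hl'
    · have hnil : l.filter (s < ·) = [] :=
        filter_eq_nil_iff.2 fun y hy => by simpa using hx y hy
      conv_lhs => rw [ih hl', hnil]
      simpa [replicate_succ] using hx
    · have hsmall : ∀ y ∈ x :: l, y < s := by
        simpa [hxs] using fun y hy => (hx y hy).trans_lt hxs
      rw [filter_eq_nil_iff.2 fun y hy => by simpa using (hsmall y hy).le,
        count_eq_zero.2 fun hs => lt_irrefl s (hsmall s hs),
        filter_eq_self.2 fun y hy => by simpa using hsmall y hy]
      simp

theorem getD_append_replicate_append {α : Type*} (A B : List α) {m t : ℕ} (a d : α)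
    (h₁ : A.length ≤ t) (h₂ : t < A.length + m) : (A ++ replicate m a ++ B).getD t d = a := by
  rw [append_assoc, getD_append_right _ _ _ _ h₁, getD_append _ _ _ _ (by simp; omega),
    getD_replicate _ (by omega)]

theorem sum_take_append_replicate_append (A B : List ℕ) {m j : ℕ} (s : ℕ)
    (h₁ : A.length ≤ j) (h₂ : j ≤ A.length + m) :
    ((A ++ replicate m s ++ B).take j).sum = A.sum + (j - A.length) * s := by
  rw [append_assoc, take_append, take_of_length_le h₁, take_append, take_replicate,
    length_replicate, Nat.sub_eq_zero_of_le (by omega : j - A.length ≤ m)]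
  simp [Nat.min_eq_left (by omega : j - A.length ≤ m)]

theorem sum_take_append_cons_succ (Y W : List ℕ) (z j : ℕ) :
    ((Y ++ (z + 1) :: W).take j).sum =
      ((Y ++ z :: W).take j).sum + if Y.length < j then 1 else 0 := by
  induction Y generalizing j with
  | nil => cases j <;> simp; omega
  | cons y Y ih => cases j <;> simp [ih]; omega

theorem sum_take_raise (X Y W : List ℕ) (x z j : ℕ) :
    ((X ++ (x + 1) :: (Y ++ z :: W)).take j).sum =
      ((X ++ x :: (Y ++ (z + 1) :: W)).take j).sum +
        if X.length < j ∧ j ≤ X.length + Y.length + 1 then 1 else 0 := by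
  have h₁ := sum_take_append_cons_succ X (Y ++ z :: W) x j
  have h₂ := sum_take_append_cons_succ (X ++ x :: Y) W z j
  simp only [append_assoc, cons_append, length_append, length_cons] at h₁ h₂
  rw [h₁, h₂]
  split_ifs <;> omega

theorem sum_take_raise_replicate (A B : List ℕ) {k s : ℕ} (hs : 0 < s) (j : ℕ) :
    ((A ++ (s + 1) :: (replicate k s ++ (s - 1) :: B)).take j).sum =
      ((A ++ replicate (k + 2) s ++ B).take j).sum +
        if A.length < j ∧ j ≤ A.length + k + 1 then 1 else 0 := by
  have hsplit : A ++ replicate (k + 2) s ++ B = A ++ s :: (replicate k s ++ (s - 1 + 1) :: B) := by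
    rw [Nat.sub_add_cancel hs, replicate_succ, replicate_succ']
    simp
  rw [hsplit]
  simpa using sum_take_raise A (replicate k s) B s (s - 1) j

end List

theorem height_zero (l : List ℕ) : height l 0 = l.length := by
  simp [height]

theorem height_append_replicate_append {A B : List ℕ} {m s : ℕ} (hA : ∀ x ∈ A, s < x)
    (hB : ∀ x ∈ B, x < s) : height (A ++ List.replicate m s ++ B) s = A.length + m := by
  rw [height, List.filter_append, List.filter_append, List.filter_eq_self.2, List.filter_eq_self.2,
    List.filter_eq_nil_iff.2]
  · simp
  all_goals grind

theorem pEps_iff {ε : ℕ} {l : List ℕ} :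
    PEps ε l ↔ ∀ s, s % 2 = ε % 2 → Even (l.count s) := by
  refine ⟨fun h s hs => ?_, fun h s _ hs => h s hs⟩
  by_cases hsl : s ∈ l
  · exact h s hsl hs
  · rw [List.count_eq_zero.2 hsl]
    exact Even.zero

namespace PEps

variable {ε : ℕ} {l : List ℕ}

theorem filter (h : PEps ε l) (p : ℕ → Bool) : PEps ε (l.filter p) := by
  rw [pEps_iff] at h ⊢
  intro s hs
  by_cases hp : p s
  · rw [List.count_filter hp]
    exact h s hs
  · rw [List.count_eq_zero.2 fun hmem => hp (List.of_mem_filter hmem)]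
    exact Even.zero

theorem even_sum (h : PEps 1 l) : Even l.sum := by
  rw [List.even_sum_iff_even_countP_odd]
  exact List.even_countP_of_forall_even_count _ fun s hs => pEps_iff.1 h s (by simpa using hs)

theorem even_length_iff_even_sum (h : PEps 0 l) : Even l.length ↔ Even l.sum := by
  have hevens : Even (l.countP fun s => ¬ s % 2 = 1) :=
    List.even_countP_of_forall_even_count _ fun s hs => pEps_iff.1 h s (by simpa using hs)
  rw [List.even_sum_iff_even_countP_odd, List.length_eq_countP_add_countP (· % 2 = 1),
    Nat.even_add]
  simp only [decide_not] at hevens ⊢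
  simp [hevens]

theorem even_sum_take_succ (h : PEps 1 l) (hl : l.Pairwise (· ≥ ·)) {t : ℕ}
    (ht : Even (l.getD t 0)) : Even (l.take (t + 1)).sum := by
  refine even_sum fun w hw hodd => ?_
  have hlt : l.getD t 0 < w := by
    have := List.getD_le_of_mem_take hl hw
    rw [Nat.even_iff] at ht
    omega
  have hdrop : (l.drop (t + 1)).count w = 0 :=
    List.count_eq_zero.2 fun hw' =>
      (List.getD_le_getD_of_pairwise_ge hl t.le_succ).trans_lt hlt |>.not_ge
        (List.le_getD_of_mem_drop hl hw')
  have hcount : (l.take (t + 1)).count w = l.count w := by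
    conv_rhs => rw [← List.take_append_drop (t + 1) l]
    rw [List.count_append, hdrop, add_zero]
  rw [hcount]
  exact pEps_iff.1 h w hodd

theorem raise {A B : List ℕ} {k s : ℕ} (h : PEps 0 (A ++ List.replicate (k + 2) s ++ B)) (hs : Even s) (hs₀ : 0 < s) :
    PEps 0 (A ++ (s + 1) :: (List.replicate k s ++ (s - 1) :: B)) := by
  rw [pEps_iff] at h ⊢
  intro v hv
  have := h v hv
  rw [Nat.even_iff] at hs
  simp only [List.count_append, List.count_cons, List.count_replicate, beq_iff_eq,
    Nat.even_iff] at this ⊢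
  split_ifs at this ⊢ <;> omega

end PEps

theorem IsPartition.raise {N : ℕ} {A B : List ℕ} {k s : ℕ}
    (h : IsPartition N (A ++ List.replicate (k + 2) s ++ B))
    (hA : ∀ x ∈ A, s < x) (hB : ∀ x ∈ B, x < s) (hs : 1 < s) :
    IsPartition N (A ++ (s + 1) :: (List.replicate k s ++ (s - 1) :: B)) := by
  obtain ⟨hsort, hpos, hsum⟩ := h
  refine ⟨?_, ?_, ?_⟩
  · simp only [List.pairwise_append, List.pairwise_cons, List.pairwise_replicate, List.mem_append,
      List.mem_cons, List.mem_replicate] at hsort ⊢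
    refine ⟨hsort.1.1, ?_, ?_⟩
    all_goals grind
  · simp only [List.mem_append, List.mem_cons, List.mem_replicate] at hpos ⊢
    grind
  · obtain ⟨r, rfl⟩ := Nat.exists_eq_add_of_lt hs
    rw [← hsum]
    simp [List.sum_append, List.sum_replicate]
    ring

theorem sum_take_succ_lt_of_dom {d e : List ℕ} (hd : d.Pairwise (· ≥ ·)) (hd₁ : PEps 1 d)
    (hed : Dom e d) {t : ℕ} (het : e.getD (t + 1) 0 = e.getD t 0) (heven : Even (e.getD t 0))
    (hodd : ¬ Even (e.take (t + 1)).sum) : (e.take (t + 1)).sum < (d.take (t + 1)).sum := by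
  refine (hed (t + 1)).lt_of_ne fun heq => hodd ?_
  -- equality at `t + 1` squeezes `e_{t+1} ≤ d_{t+1} ≤ d_t ≤ e_t`
  have hde : d.getD t 0 = e.getD t 0 := by
    have := hed t
    have := hed (t + 1 + 1)
    have := List.getD_le_getD_of_pairwise_ge hd (Nat.le_add_right t 1)
    have := List.sum_take_succ_getD e t
    have := List.sum_take_succ_getD d t
    have := List.sum_take_succ_getD e (t + 1)
    have := List.sum_take_succ_getD d (t + 1)
    omega
  rw [heq]
  exact hd₁.even_sum_take_succ hd (hde ▸ heven)

theorem sum_take_append_replicate_append_lt {d A B : List ℕ} {m s : ℕ}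
    (hd : d.Pairwise (· ≥ ·)) (hd₁ : PEps 1 d) (hed : Dom (A ++ List.replicate m s ++ B) d)
    (hs : Even s) (hA : ¬ Even A.sum) {j : ℕ} (h₁ : A.length < j) (h₂ : j < A.length + m) :
    ((A ++ List.replicate m s ++ B).take j).sum < (d.take j).sum := by
  obtain ⟨t, rfl⟩ : ∃ t, j = t + 1 := ⟨j - 1, by omega⟩
  apply sum_take_succ_lt_of_dom hd hd₁ hed
  · rw [List.getD_append_replicate_append _ _ _ _ (by omega) h₂,
      List.getD_append_replicate_append _ _ _ _ (by omega) (by omega)]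
  · rwa [List.getD_append_replicate_append _ _ _ _ (by omega) (by omega)]
  · rw [List.sum_take_append_replicate_append _ _ _ (by omega) h₂.le]
    simp [Nat.even_add, hA, hs]

theorem even_height_of_isCollapse {N : ℕ} {d e : List ℕ} (hd : d.Pairwise (· ≥ ·))
    (hd₁ : PEps 1 d) (he : IsCollapse 0 N d e) {s : ℕ} (hs : Even s) (hse : s ∈ e) :
    Even (height e s) := by
  obtain ⟨hepart, he₀, hed, hmax⟩ := he
  set A := e.filter (s < ·)
  set B := e.filter (· < s)
  have hA : ∀ x ∈ A, s < x := fun x hx => by simpa using List.of_mem_filter hx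
  have hB : ∀ x ∈ B, x < s := fun x hx => by simpa using List.of_mem_filter hx
  have hs₀ : 0 < s := hepart.2.1 s hse
  have hs₁ : 1 < s := by
    obtain ⟨r, rfl⟩ := hs
    omega
  obtain ⟨k, hk, hkeven⟩ : ∃ k, e.count s = k + 2 ∧ Even k := by
    have := List.count_pos_iff.2 hse
    obtain ⟨r, hr⟩ := he₀ s hse (Nat.even_iff.1 hs)
    exact ⟨e.count s - 2, by omega, ⟨r - 1, by omega⟩⟩
  have hsplit : e = A ++ List.replicate (k + 2) s ++ B :=
    hk ▸ e.eq_filter_append_replicate_append_filter hepart.1 s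
  rw [hsplit, height_append_replicate_append hA hB]
  by_contra hodd
  have hAodd : ¬ Even A.sum := by
    rw [← (he₀.filter _).even_length_iff_even_sum]
    simpa [Nat.even_add, hkeven] using hodd
  rw [hsplit] at hepart he₀ hed hmax
  set E := A ++ (s + 1) :: (List.replicate k s ++ (s - 1) :: B)
  have hEd : Dom E d := by
    intro j
    rw [List.sum_take_raise_replicate A B hs₀]
    split_ifs with hj
    · exact sum_take_append_replicate_append_lt hd hd₁ hed hs hAodd hj.1 (by omega)
    · simpa using hed j
  have hEe := hmax E (hepart.raise hA hB hs₁) (he₀.raise hs hs₀) hEd (A.length + 1)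
  rw [List.sum_take_raise_replicate A B hs₀, if_pos ⟨by omega, by omega⟩] at hEe
  omega

theorem fCD_mem_general (n : ℕ) (d : List ℕ)
    (hd : IsPartition (2 * n) d) (hdC : PEpsEps 1 1 d)
    (e : List ℕ) (he : IsCollapse 0 (2 * n) d e) :
    PEpsEps 0 0 e := by
  refine ⟨he.2.1, fun s hs hs' => ?_⟩
  rw [← Nat.even_iff]
  rcases hs' with rfl | hse
  · rw [height_zero, he.2.1.even_length_iff_even_sum, he.1.2.2]
    exact even_two_mul n
  · exact even_height_of_isCollapse hd.1 hdC.1 he (Nat.even_iff.2 hs) hse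

/-- If `d ∈ P^ms_C(2n) = P_{1,1}(2n)` then `f_CD(d) = d_D`, the D-collapse of `d`, lies in
`P^sp_D(2n) = P_{0,0}(2n)`. -/
theorem fCD_mem (n : ℕ) (hn : 1 ≤ n) (d : List ℕ)
    (hd : IsPartition (2 * n) d) (hdC : PEpsEps 1 1 d)
    (e : List ℕ) (he : IsCollapse 0 (2 * n) d e) :
    PEpsEps 0 0 e :=
  fCD_mem_general n d hd hdC e he
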